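/- arXiv:2001.06050 — 2 statements merged into one kernel-verified Lean document; each statement's English description precedes it below -/
import Mathlib

section
/- If X is a Hausdorff space and S ≪ T (every open cover of T admits a finite subcollection covering S), then the closure of S is contained in T. -/
/-- `S` is way below (compact relative to) `T`. -/
def WayBelow {X : Type*} [TopologicalSpace X] (S T : Set X) : Prop :=
  ∀ 𝒰 : Set (Set X), (∀ U ∈ 𝒰, IsOpen U) → T ⊆ ⋃₀ 𝒰 →
    ∃ 𝒱 ⊆ 𝒰, 𝒱.Finite ∧ S ⊆ ⋃₀ 𝒱

theorem stmt18 {X : Type*} [TopologicalSpace X] [T2Space X] (S T : Set X)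
    (h : WayBelow S T) : closure S ⊆ T := by
  intro x hx
  by_contra hxT
  set 𝒰 : Set (Set X) := {U | IsOpen U ∧ x ∉ closure U} with h𝒰
  obtain ⟨𝒱, h𝒱sub, h𝒱fin, hS𝒱⟩ := h 𝒰 (fun U hU => hU.1) (by
    intro t ht
    obtain ⟨u, v, hu, hv, htu, hxv, hd⟩ := t2_separation (show t ≠ x from fun e => hxT (e ▸ ht))
    refine ⟨u, ⟨hu, fun hc => ?_⟩, htu⟩
    have : closure u ⊆ vᶜ := closure_minimal (Set.disjoint_right.mp hd.symm) hv.isClosed_compl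
    exact this hc hxv)
  have hxcl : x ∈ closure (⋃₀ 𝒱) := closure_mono hS𝒱 hx
  rw [Set.sUnion_eq_biUnion, h𝒱fin.closure_biUnion] at hxcl
  obtain ⟨V, hV, hxV⟩ := Set.mem_iUnion₂.mp hxcl
  exact (h𝒱sub hV).2 hxV
end

section
/- If S ≪ T holds in a space X and A ≪ B holds in a space Y, then S × A ≪ T × B holds in the product space X × Y, where S ≪ T means every open cover of T has a finite subcollection covering S. -/
theorem stmt19 {X Y : Type*} [TopologicalSpace X] [TopologicalSpace Y]
    {S T : Set X} {A B : Set Y} (h1 : WayBelow S T) (h2 : WayBelow A B) :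
    WayBelow (S ×ˢ A) (T ×ˢ B) := by
  intro 𝒰 h𝒰 hcov
  have key : ∀ x y, ∃ U V W, x ∈ T → y ∈ B →
      U ∈ 𝒰 ∧ IsOpen V ∧ IsOpen W ∧ x ∈ V ∧ y ∈ W ∧ V ×ˢ W ⊆ U := by
    intro x y
    by_cases hx : x ∈ T
    · by_cases hy : y ∈ B
      · obtain ⟨U, hU, hmem⟩ := hcov (Set.mk_mem_prod hx hy)
        obtain ⟨V, W, hV, hW, hxV, hyW, hVW⟩ := isOpen_prod_iff.mp (h𝒰 U hU) x y hmem
        exact ⟨U, V, W, fun _ _ => ⟨hU, hV, hW, hxV, hyW, hVW⟩⟩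
      · exact ⟨∅, ∅, ∅, fun _ h => absurd h hy⟩
    · exact ⟨∅, ∅, ∅, fun h _ => absurd h hx⟩
  choose U V W hkey using key
  have step2 : ∀ x, ∃ F : Set Y, x ∈ T → F ⊆ B ∧ F.Finite ∧ A ⊆ ⋃ y ∈ F, W x y := by
    intro x
    by_cases hx : x ∈ T
    · obtain ⟨𝒱, h𝒱sub, h𝒱fin, hA⟩ := h2 ((W x) '' B)
        (by rintro _ ⟨y, hy, rfl⟩; exact (hkey x y hx hy).2.2.1)
        (fun y hy => Set.mem_sUnion.mpr ⟨W x y, ⟨y, hy, rfl⟩, (hkey x y hx hy).2.2.2.2.1⟩)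
      obtain ⟨F, hFB, hFfin, hA'⟩ :=
        (Set.exists_subset_image_finite_and (p := fun t => A ⊆ ⋃₀ t)).mp ⟨𝒱, h𝒱sub, h𝒱fin, hA⟩
      rw [Set.sUnion_image] at hA'
      exact ⟨F, fun _ => ⟨hFB, hFfin, hA'⟩⟩
    · exact ⟨∅, fun h => absurd h hx⟩
  choose F hF using step2
  set N : X → Set X := fun x => ⋂ y ∈ F x, V x y with hN
  obtain ⟨𝒱, h𝒱sub, h𝒱fin, hS⟩ := h1 (N '' T)
    (by rintro _ ⟨x, hx, rfl⟩
        exact (hF x hx).2.1.isOpen_biInter fun y hy => (hkey x y hx ((hF x hx).1 hy)).2.1)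
    (fun x hx => ⟨N x, ⟨x, hx, rfl⟩,
      Set.mem_iInter₂.mpr fun y hy => (hkey x y hx ((hF x hx).1 hy)).2.2.2.1⟩)
  obtain ⟨G, hGT, hGfin, hS'⟩ :=
    (Set.exists_subset_image_finite_and (p := fun t => S ⊆ ⋃₀ t)).mp ⟨𝒱, h𝒱sub, h𝒱fin, hS⟩
  refine ⟨⋃ x ∈ G, (U x) '' (F x), ?_, ?_, ?_⟩
  · exact Set.iUnion₂_subset fun x hx => Set.image_subset_iff.mpr fun y hy =>
      (hkey x y (hGT hx) ((hF x (hGT hx)).1 hy)).1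
  · exact hGfin.biUnion fun x hx => ((hF x (hGT hx)).2.1).image _
  · rintro ⟨s, a⟩ ⟨hs, ha⟩
    obtain ⟨_, ⟨x, hx, rfl⟩, hsN⟩ := hS' hs
    have hxT : x ∈ T := hGT hx
    obtain ⟨y, hy, haW⟩ := Set.mem_iUnion₂.mp ((hF x hxT).2.2 ha)
    have hyB : y ∈ B := (hF x hxT).1 hy
    have hsV : s ∈ V x y := Set.mem_iInter₂.mp hsN y hy
    exact Set.mem_sUnion.mpr ⟨U x y, Set.mem_iUnion₂.mpr ⟨x, hx, ⟨y, hy, rfl⟩⟩,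
      (hkey x y hxT hyB).2.2.2.2.2 ⟨hsV, haW⟩⟩
end
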